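/- arXiv:2204.05033 — 4 statements merged into one kernel-verified Lean document; each statement's English description precedes it below -/
import Mathlib

section
/- For any n-type P on a finite alphabet A of size m, the cardinality of the type class T(P) satisfies (n+1)^{−m} e^{nH(P)} ≤ |T(P)| ≤ e^{nH(P)}. -/
open scoped Classical BigOperators

/-- The empirical PMF (type) of a string `x ∈ A^n`. -/
noncomputable def empPMF {A : Type*} [Fintype A] (n : ℕ) (x : Fin n → A) (a : A) : ℝ :=
  ((Finset.univ.filter (fun i : Fin n => x i = a)).card : ℝ) / n

/-- Shannon entropy (natural log) of a PMF on a finite alphabet. -/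
noncomputable def shannonEntropy {A : Type*} [Fintype A] (P : A → ℝ) : ℝ :=
  -∑ a, P a * Real.log (P a)

/-!
Write `P a = k a / n`. The type class of `k` has `multinomial k` elements, being the coefficient
of `X^k` in `(∑ a, X a)^n`. Hence the multinomial theorem expands `1 = (∑ a, P a)^n` as
`∑ l, multinomial l * ∏ a, P a ^ l a` over the `n`-types `l`, and the term `l = k` equals
`|T(P)| * exp (-n H(P))`. That term is at most `1`, which is the upper bound. It is also the
largest term, because `j ↦ k^j / j!` is maximal at `j = k`; as there are at most `(n+1)^m` terms,
this gives the lower bound.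
-/

open Finset Nat

theorem Nat.factorial_mul_pow_le_factorial_mul_pow (k l : ℕ) : k ! * k ^ l ≤ l ! * k ^ k := by
  rcases le_total l k with hlk | hkl
  · calc k ! * k ^ l = l ! * k.descFactorial (k - l) * k ^ l := by
          rw [← factorial_mul_descFactorial (Nat.sub_le k l), Nat.sub_sub_self hlk]
      _ ≤ l ! * k ^ (k - l) * k ^ l := by gcongr; exact descFactorial_le_pow k _
      _ = l ! * k ^ k := by rw [mul_assoc, ← pow_add, Nat.sub_add_cancel hlk]
  · obtain ⟨d, rfl⟩ := Nat.exists_eq_add_of_le hkl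
    calc k ! * k ^ (k + d) = k ! * k ^ d * k ^ k := by ring
      _ ≤ k ! * (k + 1) ^ d * k ^ k := by gcongr; omega
      _ ≤ (k + d)! * k ^ k := by gcongr; exact factorial_mul_pow_le_factorial

theorem Nat.multinomial_mul_prod_pow_le {ι : Type*} (s : Finset ι) {k l : ι → ℕ}
    (h : ∑ i ∈ s, l i = ∑ i ∈ s, k i) :
    multinomial s l * ∏ i ∈ s, k i ^ l i ≤ multinomial s k * ∏ i ∈ s, k i ^ k i := by
  refine Nat.le_of_mul_le_mul_left ?_ (mul_pos (prod_pos (s := s) fun i _ => factorial_pos (l i))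
    (prod_pos (s := s) fun i _ => factorial_pos (k i)))
  calc (∏ i ∈ s, (l i)!) * (∏ i ∈ s, (k i)!) * (multinomial s l * ∏ i ∈ s, k i ^ l i)
      = ((∏ i ∈ s, (l i)!) * multinomial s l) * ∏ i ∈ s, (k i)! * k i ^ l i := by
        rw [prod_mul_distrib]; ring
    _ ≤ ((∏ i ∈ s, (k i)!) * multinomial s k) * ∏ i ∈ s, (l i)! * k i ^ k i := by
        rw [multinomial_spec, multinomial_spec, h]
        exact Nat.mul_le_mul_left _ (prod_le_prod (fun _ _ => Nat.zero_le _)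
          fun i _ => factorial_mul_pow_le_factorial_mul_pow (k i) (l i))
    _ = (∏ i ∈ s, (l i)!) * (∏ i ∈ s, (k i)!) * (multinomial s k * ∏ i ∈ s, k i ^ k i) := by
        rw [prod_mul_distrib]; ring

theorem Finset.card_piAntidiag_univ_le {ι : Type*} [Fintype ι] [DecidableEq ι] (n : ℕ) :
    #(piAntidiag (univ : Finset ι) n) ≤ (n + 1) ^ Fintype.card ι := by
  calc #(piAntidiag (univ : Finset ι) n) ≤ #(Fintype.piFinset fun _ : ι => range (n + 1)) := by
        refine card_le_card fun f hf => Fintype.mem_piFinset.2 fun i => mem_range_succ_iff.2 ?_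
        rw [mem_piAntidiag] at hf
        exact hf.1 ▸ single_le_sum (fun _ _ => Nat.zero_le _) (mem_univ i)
    _ = (n + 1) ^ Fintype.card ι := by simp

section Types

variable {A : Type*} [Fintype A] {n : ℕ}

noncomputable def letterCount (x : Fin n → A) (a : A) : ℕ := #{i | x i = a}

theorem empPMF_eq_div_iff (hn : n ≠ 0) (x : Fin n → A) (k : A → ℕ) :
    (empPMF n x = fun a => (k a : ℝ) / n) ↔ letterCount x = k := by
  simp [funext_iff, empPMF, letterCount, hn]

theorem sum_single_one_eq_equivFunOnFinite_symm_letterCount (x : Fin n → A) :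
    ∑ i, Finsupp.single (x i) 1 = Finsupp.equivFunOnFinite.symm (letterCount x) := by
  ext a
  simp [Finsupp.finsetSum_apply, Finsupp.single_apply, letterCount]

open MvPolynomial in
theorem card_filter_letterCount_eq (l : A → ℕ) (hl : ∑ a, l a = n) :
    #{x : Fin n → A | letterCount x = l} = multinomial univ l := by
  have key := coeff_sum_X_pow_of_fintype (R := ℕ) (Finsupp.equivFunOnFinite.symm l) n
  rw [Finsupp.sum_fintype _ _ fun _ => rfl,
    Finsupp.multinomial_eq_of_support_subset (subset_univ _)] at key
  simp only [Finsupp.coe_equivFunOnFinite_symm, hl, if_true, Nat.cast_id] at key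
  rw [← key, Fintype.sum_pow, coeff_sum]
  simp only [X, ← monomial_sum_one, coeff_monomial,
    sum_single_one_eq_equivFunOnFinite_symm_letterCount, Equiv.apply_eq_iff_eq, sum_boole,
    Nat.cast_id]

theorem prod_div_pow_self_eq_exp_neg_mul_shannonEntropy (hn : n ≠ 0) (k : A → ℕ) :
    ∏ a, ((k a : ℝ) / n) ^ k a = Real.exp (-(n * shannonEntropy fun a => (k a : ℝ) / n)) := by
  rw [shannonEntropy, mul_neg, neg_neg, mul_sum, Real.exp_sum]
  refine prod_congr rfl fun a _ => ?_
  rw [← mul_assoc, mul_div_cancel₀ _ (Nat.cast_ne_zero.2 hn)]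
  rcases (k a).eq_zero_or_pos with h | h
  · simp [h]
  · rw [Real.exp_nat_mul, Real.exp_log (by positivity)]

/-- The `P^n`-probability of the type class with letter counts `l` (see
`card_filter_letterCount_eq`). -/
noncomputable def typeProb (P : A → ℝ) (l : A → ℕ) : ℝ :=
  multinomial univ l * ∏ a, P a ^ l a

theorem typeProb_nonneg {P : A → ℝ} (hP : ∀ a, 0 ≤ P a) (l : A → ℕ) : 0 ≤ typeProb P l :=
  mul_nonneg (Nat.cast_nonneg _) (prod_nonneg fun a _ => pow_nonneg (hP a) _)

theorem sum_piAntidiag_typeProb {P : A → ℝ} (hP : ∑ a, P a = 1) (n : ℕ) :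
    ∑ l ∈ piAntidiag univ n, typeProb P l = 1 := by
  simp only [typeProb]
  rw [← sum_pow_eq_sum_piAntidiag, hP, one_pow]

theorem typeProb_le_one {P : A → ℝ} (hP0 : ∀ a, 0 ≤ P a) (hP1 : ∑ a, P a = 1) (l : A → ℕ) :
    typeProb P l ≤ 1 := by
  have hl : l ∈ piAntidiag univ (∑ a, l a) := mem_piAntidiag.2 ⟨rfl, fun a _ => mem_univ a⟩
  rw [← sum_piAntidiag_typeProb hP1 (∑ a, l a)]
  exact single_le_sum (fun l _ => typeProb_nonneg hP0 l) hl

theorem typeProb_div_le_typeProb_div_self {k l : A → ℕ} (h : ∑ a, l a = ∑ a, k a) {c : ℝ}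
    (hc : 0 ≤ c) : typeProb (fun a => k a / c) l ≤ typeProb (fun a => k a / c) k := by
  simp only [typeProb, div_pow, prod_div_distrib, prod_pow_eq_pow_sum, h, ← mul_div_assoc]
  exact div_le_div_of_nonneg_right (by exact_mod_cast multinomial_mul_prod_pow_le univ h)
    (pow_nonneg hc _)

theorem one_le_mul_typeProb_div_self (hn : n ≠ 0) {k : A → ℕ} (hk : ∑ a, k a = n) :
    1 ≤ (n + 1 : ℝ) ^ Fintype.card A * typeProb (fun a => k a / n) k := by
  have hP : ∑ a, (k a : ℝ) / n = 1 := by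
    rw [← sum_div, ← Nat.cast_sum, hk, div_self (Nat.cast_ne_zero.2 hn)]
  calc 1 = ∑ l ∈ piAntidiag univ n, typeProb (fun a => k a / n) l :=
        (sum_piAntidiag_typeProb hP n).symm
    _ ≤ #(piAntidiag univ n) * typeProb (fun a => k a / n) k := by
        simpa using sum_le_card_nsmul _ _ _ fun l hl =>
          typeProb_div_le_typeProb_div_self ((mem_piAntidiag.1 hl).1.trans hk.symm) n.cast_nonneg
    _ ≤ _ := by
        gcongr
        · exact typeProb_nonneg (fun a => by positivity) k
        · exact_mod_cast card_piAntidiag_univ_le n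

end Types

theorem type_class_card_bounds_general {A : Type*} [Fintype A]
    (n : ℕ) (hn : 0 < n) (P : A → ℝ) (hP1 : (∑ a, P a) = 1)
    (hPtype : ∀ a, ∃ j : ℕ, P a = (j : ℝ) / n) :
    ((n + 1 : ℝ) ^ (Fintype.card A))⁻¹ * Real.exp (n * shannonEntropy P)
      ≤ ((Finset.univ.filter (fun x : Fin n → A => empPMF n x = P)).card : ℝ) ∧
    ((Finset.univ.filter (fun x : Fin n → A => empPMF n x = P)).card : ℝ)
      ≤ Real.exp (n * shannonEntropy P) := by
  choose k hk using hPtype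
  obtain rfl : P = fun a => (k a : ℝ) / n := funext hk
  have hkn : ∑ a, k a = n := by
    simp only at hP1
    rw [← sum_div, div_eq_one_iff_eq (by positivity)] at hP1
    exact_mod_cast hP1
  have hupper := typeProb_le_one (fun a => by positivity) hP1 k
  have hlower := one_le_mul_typeProb_div_self hn.ne' hkn
  have hE := Real.exp_pos (n * shannonEntropy fun a => (k a : ℝ) / n)
  rw [typeProb, prod_div_pow_self_eq_exp_neg_mul_shannonEntropy hn.ne', Real.exp_neg,
    ← div_eq_mul_inv] at hupper hlower
  rw [div_le_one hE] at hupper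
  rw [← mul_div_assoc, one_le_div hE] at hlower
  simp only [empPMF_eq_div_iff hn.ne', card_filter_letterCount_eq k hkn]
  exact ⟨by rwa [inv_mul_le_iff₀ (by positivity)], hupper⟩

/-- for any `n`-type `P` on `A` with `|A| = m`, the type class
`T(P)` satisfies `(n+1)^{-m} e^{nH(P)} ≤ |T(P)| ≤ e^{nH(P)}`. -/
theorem type_class_card_bounds {A : Type*} [Fintype A]
    (n : ℕ) (hn : 0 < n) (P : A → ℝ) (hP0 : ∀ a, 0 ≤ P a) (hP1 : (∑ a, P a) = 1)
    (hPtype : ∀ a, ∃ j : ℕ, P a = (j : ℝ) / n) :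
    ((n + 1 : ℝ) ^ (Fintype.card A))⁻¹ * Real.exp (n * shannonEntropy P)
      ≤ ((Finset.univ.filter (fun x : Fin n → A => empPMF n x = P)).card : ℝ) ∧
    ((Finset.univ.filter (fun x : Fin n → A => empPMF n x = P)).card : ℝ)
      ≤ Real.exp (n * shannonEntropy P) :=
  type_class_card_bounds_general n hn P hP1 hPtype
end

section
/- If X_1,...,X_n are exchangeable random variables with values in a finite alphabet A, then for every a ∈ A, the conditional probability P(X_1 = a | P̂_{X_1^n}) equals P̂_{X_1^n}(a) almost surely, where P̂_{X_1^n} is the empirical PMF of (X_1,...,X_n). Consequently, the distribution of X_1 equals the mixture ∫ Q(·) dμ(Q), where μ is the law of P̂_{X_1^n}. -/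
/-! Weighting by a permutation-invariant `f`, the mass of `{x_i = a}` does not depend on `i`, since
swapping coordinates `i` and `j` preserves `f`. Averaging over `i` turns the indicator of `x_i = a`
into the empirical frequency of `a`. Taking `f = p` gives the mixture formula, and taking `f = p`
restricted to the permutation-invariant event `{P̂ = Q}` gives the conditional law. -/

open scoped Classical BigOperators

section Exchangeable

variable {A : Type*} [Fintype A] {n : ℕ}

lemma empPMF_comp_perm (x : Fin n → A) (σ : Equiv.Perm (Fin n)) :
    empPMF n (x ∘ σ) = empPMF n x := by
  funext a
  unfold empPMF
  congr 2
  exact Finset.card_equiv σ (by simp)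

lemma sum_comp_perm (σ : Equiv.Perm (Fin n)) (F : (Fin n → A) → ℝ) :
    ∑ x, F (x ∘ σ) = ∑ x, F x :=
  Fintype.sum_equiv (Equiv.arrowCongr σ.symm (Equiv.refl A)) _ _ fun _ => rfl

lemma sum_ite_coord_eq_of_perm_invariant {f : (Fin n → A) → ℝ}
    (hf : ∀ (σ : Equiv.Perm (Fin n)) x, f (x ∘ σ) = f x) (i j : Fin n) (a : A) :
    ∑ x, (if x i = a then f x else 0) = ∑ x, (if x j = a then f x else 0) := by
  rw [← sum_comp_perm (Equiv.swap i j)]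
  simp only [Function.comp_apply, Equiv.swap_apply_left, hf]

lemma sum_ite_coord_eq_sum_mul_empPMF {f : (Fin n → A) → ℝ}
    (hf : ∀ (σ : Equiv.Perm (Fin n)) x, f (x ∘ σ) = f x) (i : Fin n) (a : A) :
    ∑ x, (if x i = a then f x else 0) = ∑ x, f x * empPMF n x a := by
  have hn : (n : ℝ) ≠ 0 := Nat.cast_ne_zero.mpr (Fin.pos i).ne'
  apply mul_left_cancel₀ hn
  calc (n : ℝ) * ∑ x, (if x i = a then f x else 0)
      = ∑ j : Fin n, ∑ x, (if x j = a then f x else 0) := by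
        simp [sum_ite_coord_eq_of_perm_invariant hf _ i]
    _ = ∑ x, ((Finset.univ.filter fun j => x j = a).card : ℝ) * f x := by
        rw [Finset.sum_comm]
        simp [Finset.sum_ite, Finset.sum_const]
    _ = (n : ℝ) * ∑ x, f x * empPMF n x a := by
        rw [Finset.mul_sum]
        refine Finset.sum_congr rfl fun x _ => ?_
        unfold empPMF
        field_simp

end Exchangeable

theorem cond_law_first_coord_eq_type_general {A : Type*} [Fintype A]
    (n : ℕ) (hn : 0 < n) (p : (Fin n → A) → ℝ)
    (hexch : ∀ (π : Equiv.Perm (Fin n)) (x : Fin n → A), p (x ∘ π) = p x) :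
    (∀ (Q : A → ℝ), (∑ x, if empPMF n x = Q then p x else 0) ≠ 0 →
      ∀ a : A, (∑ x, if x ⟨0, hn⟩ = a ∧ empPMF n x = Q then p x else 0)
        = Q a * (∑ x, if empPMF n x = Q then p x else 0)) ∧
    (∀ a : A, (∑ x, if x ⟨0, hn⟩ = a then p x else 0) = ∑ x, p x * empPMF n x a) := by
  refine ⟨fun Q _ a => ?_, sum_ite_coord_eq_sum_mul_empPMF hexch ⟨0, hn⟩⟩
  have hinv : ∀ (σ : Equiv.Perm (Fin n)) x,
      (if empPMF n (x ∘ σ) = Q then p (x ∘ σ) else 0) = if empPMF n x = Q then p x else 0 := by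
    intro σ x
    rw [empPMF_comp_perm, hexch]
  simp only [ite_and]
  rw [sum_ite_coord_eq_sum_mul_empPMF hinv, Finset.mul_sum]
  refine Finset.sum_congr rfl fun x _ => ?_
  split_ifs with hx <;> simp [hx, mul_comm]

/-- for exchangeable `X_1,…,X_n` with values in a finite alphabet,
`P(X_1 = a | P̂_{X_1^n} = Q) = Q(a)` (for any `Q` of positive probability, which is
the discrete form of the a.s. statement), and consequently the law of `X_1` is the
mixture `∫ Q(·) dμ(Q)` where `μ` is the law of the empirical measure `P̂_{X_1^n}`. -/
theorem cond_law_first_coord_eq_type {A : Type*} [Fintype A]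
    (n : ℕ) (hn : 0 < n) (p : (Fin n → A) → ℝ)
    (hp0 : ∀ x, 0 ≤ p x) (hp1 : (∑ x, p x) = 1)
    (hexch : ∀ (π : Equiv.Perm (Fin n)) (x : Fin n → A), p (x ∘ π) = p x) :
    (∀ (Q : A → ℝ), (∑ x, if empPMF n x = Q then p x else 0) ≠ 0 →
      ∀ a : A, (∑ x, if x ⟨0, hn⟩ = a ∧ empPMF n x = Q then p x else 0)
        = Q a * (∑ x, if empPMF n x = Q then p x else 0)) ∧
    (∀ a : A, (∑ x, if x ⟨0, hn⟩ = a then p x else 0) = ∑ x, p x * empPMF n x a) :=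
  cond_law_first_coord_eq_type_general n hn p hexch
end

section
/- Let Q be a PMF on a finite alphabet A and k ≥ 1. Among all probability distributions W on A^k whose k one-dimensional marginals average to Q (i.e. (1/k)∑_{j=1}^k W_j = Q), the unique minimizer of D(W‖U_k), where U_k is the uniform distribution on A^k, is the product distribution Q^k, and the minimum value is k log m − k H(Q) where m = |A|. -/
open scoped Classical BigOperators

/-- The `j`-th one-dimensional marginal of a distribution `W` on `A^k`. -/
noncomputable def marginal {A : Type*} [Fintype A] (k : ℕ) (W : (Fin k → A) → ℝ)
    (j : Fin k) (a : A) : ℝ :=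
  ∑ y : Fin k → A, if y j = a then W y else 0

/-- Relative entropy (natural log), finite-sum form. -/
noncomputable def relEnt {A : Type*} [Fintype A] (P Q : A → ℝ) : ℝ :=
  ∑ a, P a * Real.log (P a / Q a)

/-!
Write `P = Q^k` and `c = m^{-k}` for the uniform mass. If `W` satisfies the marginal constraint,
then `W` vanishes wherever `P` does, and `∑_y W y log P y = ∑_j ∑_a W_j a log Q a = -k H(Q)`
depends on `W` only through the average marginal. Hence
`D(W‖U) = ∑ W log W - log c = D(W‖P) + k log m - k H(Q)`,
and Gibbs' inequality `D(W‖P) ≥ 0`, with equality only for `W = P`, gives the theorem.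
-/

open Real InformationTheory

section RelativeEntropy

variable {X : Type*} [Fintype X]

lemma relEnt_eq_sub_of_support (W P : X → ℝ) (hWP : ∀ x, P x = 0 → W x = 0) :
    relEnt W P = ∑ x, W x * log (W x) - ∑ x, W x * log (P x) := by
  rw [relEnt, ← Finset.sum_sub_distrib]
  refine Finset.sum_congr rfl fun x _ => ?_
  by_cases hW : W x = 0
  · simp [hW]
  · rw [log_div hW fun hP => hW (hWP x hP)]
    ring

lemma relEnt_self (P : X → ℝ) : relEnt P P = 0 := by
  rw [relEnt_eq_sub_of_support P P fun _ h => h, sub_self]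

lemma relEnt_eq_sum_mul_klFun {W P : X → ℝ} (hW1 : ∑ x, W x = 1) (hP1 : ∑ x, P x = 1)
    (hWP : ∀ x, P x = 0 → W x = 0) :
    relEnt W P = ∑ x, P x * klFun (W x / P x) := by
  have hterm : ∀ x, P x * klFun (W x / P x) = W x * log (W x / P x) + P x - W x := by
    intro x
    by_cases hP : P x = 0
    · simp [hP, hWP x hP]
    · rw [klFun_apply]
      field_simp
  rw [Finset.sum_congr rfl fun x _ => hterm x, Finset.sum_sub_distrib, Finset.sum_add_distrib,
    hW1, hP1, relEnt, add_sub_cancel_right]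

lemma relEnt_nonneg_and_eq_of_relEnt_eq_zero {W P : X → ℝ} (hW0 : ∀ x, 0 ≤ W x)
    (hW1 : ∑ x, W x = 1) (hP0 : ∀ x, 0 ≤ P x) (hP1 : ∑ x, P x = 1)
    (hWP : ∀ x, P x = 0 → W x = 0) :
    0 ≤ relEnt W P ∧ (relEnt W P = 0 → W = P) := by
  have hratio : ∀ x, 0 ≤ W x / P x := fun x => div_nonneg (hW0 x) (hP0 x)
  have hterm : ∀ x ∈ Finset.univ, 0 ≤ P x * klFun (W x / P x) :=
    fun x _ => mul_nonneg (hP0 x) (klFun_nonneg (hratio x))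
  rw [relEnt_eq_sum_mul_klFun hW1 hP1 hWP]
  refine ⟨Finset.sum_nonneg hterm, fun hzero => funext fun x => ?_⟩
  rcases mul_eq_zero.mp ((Finset.sum_eq_zero_iff_of_nonneg hterm).mp hzero x
    (Finset.mem_univ x)) with hP | hkl
  · rw [hP, hWP x hP]
  · exact (div_eq_one_iff_eq fun hP => by simp [hP, klFun_zero] at hkl).mp
      ((klFun_eq_zero_iff (hratio x)).mp hkl)

lemma relEnt_const {W : X → ℝ} (hW1 : ∑ x, W x = 1) {c : ℝ} (hc : c ≠ 0) :
    relEnt W (fun _ => c) = ∑ x, W x * log (W x) - log c := by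
  rw [relEnt_eq_sub_of_support W _ fun _ h => absurd h hc, ← Finset.sum_mul, hW1, one_mul]

end RelativeEntropy

section Marginals

variable {A : Type*} [Fintype A]

section Product

variable {ι : Type*} [Fintype ι] [DecidableEq ι] {Q : A → ℝ}

lemma sum_mul_prod_apply (hQ1 : ∑ a, Q a = 1) (g : A → ℝ) (j : ι) :
    ∑ y : ι → A, g (y j) * ∏ i, Q (y i) = ∑ a, g a * Q a := by
  set F : ι → A → ℝ := fun i a => (if i = j then g a else 1) * Q a
  have hF : ∀ y : ι → A, g (y j) * ∏ i, Q (y i) = ∏ i, F i (y i) := fun y => by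
    rw [Finset.prod_mul_distrib, Fintype.prod_ite_eq']
  rw [Finset.sum_congr rfl fun y _ => hF y, ← Fintype.prod_sum,
    Fintype.prod_eq_single j fun i hij => by simp [F, hij, hQ1]]
  simp [F]

lemma sum_prod_apply (hQ1 : ∑ a, Q a = 1) : ∑ y : ι → A, ∏ i, Q (y i) = 1 := by
  rw [← Fintype.prod_sum, Finset.prod_congr rfl fun _ _ => hQ1, Finset.prod_const_one]

end Product

lemma marginal_prod {k : ℕ} {Q : A → ℝ} (hQ1 : ∑ a, Q a = 1) (j : Fin k) (a : A) :
    marginal k (fun y => ∏ i, Q (y i)) j a = Q a := by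
  have h := sum_mul_prod_apply hQ1 (fun b => if b = a then 1 else 0) j
  simp only [ite_mul, one_mul, zero_mul, Finset.sum_ite_eq', Finset.mem_univ, if_true] at h
  exact h

lemma sum_mul_apply_eq_sum_marginal {k : ℕ} (W : (Fin k → A) → ℝ) (f : A → ℝ)
    (j : Fin k) :
    ∑ y : Fin k → A, W y * f (y j) = ∑ a, marginal k W j a * f a := by
  simp only [marginal, Finset.sum_mul, ite_mul, zero_mul]
  rw [Finset.sum_comm]
  simp

lemma marginal_nonneg {k : ℕ} {W : (Fin k → A) → ℝ} (hW0 : ∀ y, 0 ≤ W y) (j : Fin k)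
    (a : A) : 0 ≤ marginal k W j a :=
  Finset.sum_nonneg fun y _ => by split_ifs <;> simp [hW0 y]

variable {k : ℕ} {Q : A → ℝ} {W : (Fin k → A) → ℝ}

lemma eq_zero_of_prod_eq_zero_of_avg_marginal (hk : k ≠ 0) (hW0 : ∀ y, 0 ≤ W y)
    (hW : ∀ a, (∑ j : Fin k, marginal k W j a) / k = Q a) (y : Fin k → A)
    (hy : ∏ i, Q (y i) = 0) : W y = 0 := by
  obtain ⟨i, -, hQ⟩ := Finset.prod_eq_zero_iff.mp hy
  have hsum : ∑ j : Fin k, marginal k W j (y i) = 0 := by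
    simpa [hQ, hk] using hW (y i)
  have hmarg : marginal k W i (y i) = 0 :=
    (Finset.sum_eq_zero_iff_of_nonneg fun j _ => marginal_nonneg hW0 j (y i)).mp hsum i
      (Finset.mem_univ i)
  have hterm := (Finset.sum_eq_zero_iff_of_nonneg fun z _ => ?_).mp hmarg y (Finset.mem_univ y)
  · simpa using hterm
  · split_ifs <;> simp [hW0 z]

lemma sum_mul_log_prod_of_avg_marginal (hk : k ≠ 0) (hW0 : ∀ y, 0 ≤ W y)
    (hW : ∀ a, (∑ j : Fin k, marginal k W j a) / k = Q a) :
    ∑ y, W y * log (∏ i, Q (y i)) = -(k * shannonEntropy Q) := by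
  have hlog : ∀ y : Fin k → A, W y * log (∏ i, Q (y i)) = ∑ i, W y * log (Q (y i)) := by
    intro y
    by_cases hy : ∏ i, Q (y i) = 0
    · simp [eq_zero_of_prod_eq_zero_of_avg_marginal hk hW0 hW y hy]
    · rw [log_prod fun i _ => Finset.prod_ne_zero_iff.mp hy i (Finset.mem_univ i),
        Finset.mul_sum]
  have hsum : ∀ a, ∑ j : Fin k, marginal k W j a = k * Q a := fun a => by
    rw [← hW a, mul_div_cancel₀ _ (Nat.cast_ne_zero.mpr hk)]
  calc ∑ y, W y * log (∏ i, Q (y i))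
      = ∑ i, ∑ y : Fin k → A, W y * log (Q (y i)) := by
        simp_rw [hlog]
        exact Finset.sum_comm
    _ = ∑ i, ∑ a, marginal k W i a * log (Q a) :=
        Finset.sum_congr rfl fun i _ => sum_mul_apply_eq_sum_marginal W (fun a => log (Q a)) i
    _ = ∑ a, k * Q a * log (Q a) := by
        rw [Finset.sum_comm]
        simp_rw [← Finset.sum_mul, hsum]
    _ = -(k * shannonEntropy Q) := by
        rw [shannonEntropy, mul_neg, neg_neg, Finset.mul_sum]
        simp_rw [mul_assoc]

lemma relEnt_uniform_eq_relEnt_prod_add (hk : k ≠ 0) (hW0 : ∀ y, 0 ≤ W y)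
    (hW1 : ∑ y, W y = 1) (hW : ∀ a, (∑ j : Fin k, marginal k W j a) / k = Q a) :
    relEnt W (fun _ => ((Fintype.card A : ℝ) ^ k)⁻¹)
      = relEnt W (fun y => ∏ i, Q (y i))
        + (k * log (Fintype.card A) - k * shannonEntropy Q) := by
  obtain ⟨y, -, -⟩ := Finset.exists_ne_zero_of_sum_ne_zero (hW1 ▸ one_ne_zero)
  have : Nonempty A := ⟨y ⟨0, Nat.pos_of_ne_zero hk⟩⟩
  rw [relEnt_const hW1 (by positivity),
    relEnt_eq_sub_of_support W _ (eq_zero_of_prod_eq_zero_of_avg_marginal hk hW0 hW),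
    sum_mul_log_prod_of_avg_marginal hk hW0 hW, log_inv, log_pow]
  ring

end Marginals

theorem product_minimizes_relEnt_to_uniform_general {A : Type*} [Fintype A]
    (k : ℕ) (hk : 1 ≤ k) (Q : A → ℝ) (hQ0 : ∀ a, 0 ≤ Q a) (hQ1 : (∑ a, Q a) = 1)
    (U : (Fin k → A) → ℝ) (hU : ∀ y, U y = ((Fintype.card A : ℝ) ^ k)⁻¹) :
    (∀ a : A, (∑ j : Fin k, marginal k (fun y => ∏ i, Q (y i)) j a) / k = Q a) ∧
    relEnt (fun y : Fin k → A => ∏ i, Q (y i)) U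
      = k * Real.log (Fintype.card A) - k * shannonEntropy Q ∧
    (∀ W : (Fin k → A) → ℝ, (∀ y, 0 ≤ W y) → (∑ y, W y) = 1 →
      (∀ a : A, (∑ j : Fin k, marginal k W j a) / k = Q a) →
      (relEnt (fun y : Fin k → A => ∏ i, Q (y i)) U ≤ relEnt W U ∧
        (relEnt W U = relEnt (fun y : Fin k → A => ∏ i, Q (y i)) U →
          W = fun y : Fin k → A => ∏ i, Q (y i)))) := by
  have hk0 : k ≠ 0 := by omega
  obtain rfl : U = fun _ => ((Fintype.card A : ℝ) ^ k)⁻¹ := funext hU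
  have hP0 : ∀ y : Fin k → A, 0 ≤ ∏ i, Q (y i) := fun y =>
    Finset.prod_nonneg fun i _ => hQ0 _
  have hPmarg : ∀ a, (∑ j : Fin k, marginal k (fun y => ∏ i, Q (y i)) j a) / k = Q a := by
    simp [marginal_prod hQ1, hk0]
  have hPval := relEnt_uniform_eq_relEnt_prod_add hk0 hP0 (sum_prod_apply hQ1) hPmarg
  rw [relEnt_self, zero_add] at hPval
  refine ⟨hPmarg, hPval, fun W hW0 hW1 hW => ?_⟩
  obtain ⟨hgibbs, hgibbs_eq⟩ := relEnt_nonneg_and_eq_of_relEnt_eq_zero hW0 hW1 hP0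
    (sum_prod_apply hQ1) (eq_zero_of_prod_eq_zero_of_avg_marginal hk0 hW0 hW)
  rw [relEnt_uniform_eq_relEnt_prod_add hk0 hW0 hW1 hW, hPval]
  exact ⟨by linarith, fun h => hgibbs_eq (by linarith)⟩

/-- among all `W` on `A^k` with `(1/k)∑_j W_j = Q`, the unique minimizer
of `D(W‖U_k)` (`U_k` uniform on `A^k`) is the product `Q^k`, with minimum value
`k log m − k H(Q)`. -/
theorem product_minimizes_relEnt_to_uniform {A : Type*} [Fintype A] [Nonempty A]
    (k : ℕ) (hk : 1 ≤ k) (Q : A → ℝ) (hQ0 : ∀ a, 0 ≤ Q a) (hQ1 : (∑ a, Q a) = 1)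
    (U : (Fin k → A) → ℝ) (hU : ∀ y, U y = ((Fintype.card A : ℝ) ^ k)⁻¹) :
    (∀ a : A, (∑ j : Fin k, marginal k (fun y => ∏ i, Q (y i)) j a) / k = Q a) ∧
    relEnt (fun y : Fin k → A => ∏ i, Q (y i)) U
      = k * Real.log (Fintype.card A) - k * shannonEntropy Q ∧
    (∀ W : (Fin k → A) → ℝ, (∀ y, 0 ≤ W y) → (∑ y, W y) = 1 →
      (∀ a : A, (∑ j : Fin k, marginal k W j a) / k = Q a) →
      (relEnt (fun y : Fin k → A => ∏ i, Q (y i)) U ≤ relEnt W U ∧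
        (relEnt W U = relEnt (fun y : Fin k → A => ∏ i, Q (y i)) U →
          W = fun y : Fin k → A => ∏ i, Q (y i)))) :=
  product_minimizes_relEnt_to_uniform_general k hk Q hQ0 hQ1 U hU
end

section
/- Let x_1^{kℓ} ∈ A^{kℓ} have type Q, let V_1^{kℓ} be a uniformly random permutation of x_1^{kℓ}. Then for any a_1^k ∈ A^k, P(V_1^k = a_1^k) ≤ Q^k(a_1^k)·(1 + k/ℓ). -/
/-!
Fixing the values of `σ` on the first `k` positions determines `σ` up to a permutation fixing
those positions, and for `x ∘ σ` to start with `a` these values must lie in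
`∏ i, {j | x j = a i}`. Hence at most `(∏ i, n(a i)) · (n - k)!` permutations qualify, and the
probability is at most `∏ i, n(a i) / n.descFactorial k`. Against `Q^k(a) = ∏ i, n(a i) / n^k`
this leaves `n^k ≤ (1 + k/ℓ) · n.descFactorial k` for `n = kℓ`, which follows from the
Weierstrass-type bound `n.descFactorial k ≥ n^k (1 - k(k-1)/(2n))` and
`(1 + k/ℓ)(1 - (k-1)/(2ℓ)) ≥ 1` for `k ≤ ℓ`.
-/

open scoped Classical BigOperators

open Finset Equiv Nat

section PermCounting

variable {α ι : Type*} [Fintype α] [DecidableEq α] [Fintype ι]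

theorem card_perm_fixing_range {e : ι → α} (he : Function.Injective e) :
    (univ.filter fun τ : Perm α => ∀ i, τ (e i) = e i).card
      = (Fintype.card α - Fintype.card ι)! := by
  have hfix : (univ.filter fun τ : Perm α => ∀ i, τ (e i) = e i)
      = univ.filter fun τ => ∀ a, ¬ a ∉ Set.range e → τ a = a := by
    ext τ; simp
  rw [hfix, ← Fintype.card_subtype, ← Fintype.card_congr (Perm.subtypeEquivSubtypePerm _),
    Fintype.card_perm, Fintype.card_subtype_compl, Set.card_range_of_injective he]

theorem card_perm_apply_eq_le (e f : ι → α) :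
    (univ.filter fun σ : Perm α => ∀ i, σ (e i) = f i).card
      ≤ (univ.filter fun τ : Perm α => ∀ i, τ (e i) = e i).card := by
  obtain ⟨σ₀, hσ₀⟩ | hempty :=
    (univ.filter fun σ : Perm α => ∀ i, σ (e i) = f i).eq_empty_or_nonempty.symm
  · simp only [mem_filter, mem_univ, true_and] at hσ₀
    refine card_le_card_of_injOn (σ₀⁻¹ * ·) (fun σ hσ => ?_) (mul_right_injective _).injOn
    simp only [coe_filter, mem_univ, true_and, Set.mem_ofPred_eq] at hσ ⊢
    intro i
    rw [Perm.mul_apply, hσ, ← hσ₀, Perm.inv_def, symm_apply_apply]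
  · simp [hempty]

theorem card_perm_comp_eq_le {A : Type*} (e : ι → α) (x : α → A) (a : ι → A) :
    (univ.filter fun σ : Perm α => ∀ i, x (σ (e i)) = a i).card
      ≤ (∏ i, (univ.filter fun j => x j = a i).card)
        * (univ.filter fun τ : Perm α => ∀ i, τ (e i) = e i).card := by
  rw [mul_comm, ← Fintype.card_piFinset]
  refine card_le_mul_card_image_of_maps_to (f := fun σ i => σ (e i)) ?_ _ fun f _ => ?_
  · intro σ hσ
    simp_all [Fintype.mem_piFinset]
  · refine (card_le_card fun σ hσ => ?_).trans (card_perm_apply_eq_le e f)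
    simp only [mem_filter, mem_univ, true_and] at hσ ⊢
    exact fun i => congrFun hσ.2 i

theorem card_perm_comp_eq_div_factorial_le {A : Type*} {e : ι → α} (he : Function.Injective e)
    (x : α → A) (a : ι → A) :
    ((univ.filter fun σ : Perm α => ∀ i, x (σ (e i)) = a i).card : ℝ) / (Fintype.card α)!
      ≤ (∏ i, (univ.filter fun j => x j = a i).card : ℕ)
        / (Fintype.card α).descFactorial (Fintype.card ι) := by
  have hle := Fintype.card_le_of_injective e he
  have hcount := card_perm_comp_eq_le e x a
  rw [card_perm_fixing_range he] at hcount
  have hD : (0 : ℝ) < (Fintype.card α).descFactorial (Fintype.card ι) := by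
    exact_mod_cast descFactorial_pos.2 hle
  rw [← factorial_mul_descFactorial hle, Nat.cast_mul,
    div_le_div_iff₀ (mul_pos (by positivity) hD) hD]
  calc _ ≤ ((∏ i, (univ.filter fun j => x j = a i).card : ℕ)
          * (Fintype.card α - Fintype.card ι)! : ℝ)
        * (Fintype.card α).descFactorial (Fintype.card ι) := by gcongr; exact_mod_cast hcount
    _ = _ := by ring

end PermCounting

theorem pow_mul_sub_le_descFactorial {n k : ℕ} (h : k ≤ n) :
    (n : ℝ) ^ k * (2 * n - k * (k - 1)) ≤ 2 * n * n.descFactorial k := by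
  induction k with
  | zero => simp
  | succ k ih =>
    have hD : (n.descFactorial k : ℝ) ≤ (n : ℝ) ^ k := by
      exact_mod_cast n.descFactorial_le_pow k
    have h1 := mul_le_mul_of_nonneg_left (ih (by omega)) (Nat.cast_nonneg n : (0 : ℝ) ≤ n)
    have h2 := mul_le_mul_of_nonneg_left hD (by positivity : (0 : ℝ) ≤ 2 * k * n)
    rw [descFactorial_succ, Nat.cast_mul, Nat.cast_sub (by omega)]
    push_cast
    linear_combination h1 + h2

theorem pow_div_descFactorial_le {k ℓ : ℕ} (hk : 0 < k) (hl : k ≤ ℓ) :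
    ((k * ℓ : ℕ) : ℝ) ^ k / (k * ℓ).descFactorial k ≤ 1 + k / ℓ := by
  set n := k * ℓ with hn
  have hℓ : (0 : ℝ) < ℓ := by exact_mod_cast hk.trans_le hl
  have hkn : k ≤ n := Nat.le_mul_of_pos_right k (hk.trans_le hl)
  have hnpos : (0 : ℝ) < n := by exact_mod_cast hk.trans_le hkn
  have hD : (0 : ℝ) < n.descFactorial k := by exact_mod_cast descFactorial_pos.2 hkn
  have hcoef : 2 * (n : ℝ) ≤ (1 + k / ℓ) * (2 * n - k * (k - 1)) := by
    have hlk : (k : ℝ) ≤ ℓ := by exact_mod_cast hl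
    rw [hn, Nat.cast_mul, ← sub_nonneg]
    field_simp
    have hk0 : (0 : ℝ) ≤ k := k.cast_nonneg
    nlinarith [mul_nonneg (mul_nonneg hk0 hk0) (sub_nonneg.2 hlk), mul_nonneg hk0 hℓ.le]
  rw [div_le_iff₀ hD]
  refine le_of_mul_le_mul_left ?_ (by positivity : (0 : ℝ) < 2 * n)
  calc 2 * n * (n : ℝ) ^ k ≤ (1 + k / ℓ) * ((n : ℝ) ^ k * (2 * n - k * (k - 1))) := by
        nlinarith [pow_pos hnpos k]
    _ ≤ (1 + k / ℓ) * (2 * n * n.descFactorial k) :=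
        mul_le_mul_of_nonneg_left (pow_mul_sub_le_descFactorial hkn) (by positivity)
    _ = 2 * n * ((1 + k / ℓ) * n.descFactorial k) := by ring

theorem random_perm_first_block_prob_upper_general {A : Type*} [Fintype A]
    (k ℓ : ℕ) (hl : k ≤ ℓ) (hkl : k ≤ k * ℓ)
    (x : Fin (k * ℓ) → A) (a : Fin k → A) :
    ((Finset.univ.filter (fun σ : Equiv.Perm (Fin (k * ℓ)) =>
        ∀ i : Fin k, x (σ (Fin.castLE hkl i)) = a i)).card : ℝ)
        / (Nat.factorial (k * ℓ))
      ≤ (∏ i, empPMF (k * ℓ) x (a i)) * (1 + (k : ℝ) / ℓ) := by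
  rcases k.eq_zero_or_pos with rfl | hk
  · simp
  have hprob := card_perm_comp_eq_div_factorial_le (Fin.castLE_injective hkl) x a
  simp only [Fintype.card_fin] at hprob
  have hpow : ((k * ℓ : ℕ) : ℝ) ^ k ≠ 0 := by
    have : 0 < k * ℓ := Nat.mul_pos hk (hk.trans_le hl)
    positivity
  have htype : ∏ i, empPMF (k * ℓ) x (a i)
      = (∏ i, (univ.filter fun j => x j = a i).card : ℕ) / ((k * ℓ : ℕ) : ℝ) ^ k := by
    simp [empPMF, prod_div_distrib]
  -- `convert` bridges the statement's `Nat.decidableForallFin` and the lemma's `Fintype` instance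
  calc _ ≤ _ := by convert hprob
    _ = (∏ i, empPMF (k * ℓ) x (a i))
          * (((k * ℓ : ℕ) : ℝ) ^ k / (k * ℓ).descFactorial k) := by
        rw [htype]; field_simp
    _ ≤ _ :=
        mul_le_mul_of_nonneg_left (pow_div_descFactorial_le hk hl) (by rw [htype]; positivity)

/-- if `x_1^{kℓ}` has type `Q` and `V_1^{kℓ}` is a uniformly random
permutation of `x_1^{kℓ}`, then `P(V_1^k = a_1^k) ≤ Q^k(a_1^k)·(1 + k/ℓ)`.
The probability is the number of permutations `σ` with `(x∘σ)` starting with `a_1^k`,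
divided by `(kℓ)!`; `Q` is the empirical PMF of `x`. -/
theorem random_perm_first_block_prob_upper {A : Type*} [Fintype A]
    (k ℓ : ℕ) (hk : 1 ≤ k) (hl : k ≤ ℓ) (hkl : k ≤ k * ℓ)
    (x : Fin (k * ℓ) → A) (a : Fin k → A) :
    ((Finset.univ.filter (fun σ : Equiv.Perm (Fin (k * ℓ)) =>
        ∀ i : Fin k, x (σ (Fin.castLE hkl i)) = a i)).card : ℝ)
        / (Nat.factorial (k * ℓ))
      ≤ (∏ i, empPMF (k * ℓ) x (a i)) * (1 + (k : ℝ) / ℓ) :=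
  random_perm_first_block_prob_upper_general k ℓ hl hkl x a
end
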